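/- If the signed radius of curvature R admits a local extremum at a point s₁ ∈ (a,b), then the evolute γ̃ is not C¹-regular at s₁: there is no neighborhood of s₁ on which γ̃ admits a C¹ reparametrization with nowhere-vanishing derivative. -/

import Mathlib

open Set Real Topology Filter
open scoped NNReal

noncomputable section

/-- The Euclidean plane. -/
abbrev Plane := EuclideanSpace ℝ (Fin 2)

/-- Rotation of a plane vector by `+π/2`. -/
def Jrot (v : Plane) : Plane := WithLp.toLp 2 ![-(v 1), v 0]

local notation "⟪" x ", " y "⟫" => @inner ℝ _ _ x y

/-- `f` is of class `C^{k,α}` on `s` : it is `C^k` there and (when `α ≠ 0`) its `k`-th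
derivative is `α`-Hölder continuous on `s`.  (`α = 0` means plain `C^k`.) -/
def IsCkAlphaOn (k : ℕ) (α : ℝ≥0) (f : ℝ → Plane) (s : Set ℝ) : Prop :=
  ContDiffOn ℝ k f s ∧ (α = 0 ∨ ∃ C : ℝ≥0, HolderOnWith C α (iteratedDeriv k f) s)

/-- The curve `f` restricted to `(u,v)` is `C^{k,α}`-regular: it admits a
reparametrization of class `C^{k,α}` whose derivative never vanishes. -/
def CkAlphaRegularOn (k : ℕ) (α : ℝ≥0) (f : ℝ → Plane) (u v : ℝ) : Prop :=
  ∃ c d : ℝ, c < d ∧ ∃ φ : ℝ → ℝ,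
    ContinuousOn φ (Set.Ioo c d) ∧ Set.BijOn φ (Set.Ioo c d) (Set.Ioo u v) ∧
    IsCkAlphaOn k α (f ∘ φ) (Set.Ioo c d) ∧
    ∀ t ∈ Set.Ioo c d, deriv (f ∘ φ) t ≠ 0


/-!
A curve `g` with `g' t₀ ≠ 0` has obtuse chords at `t₀`: for `t < t₀ < t'` close to `t₀` the
vectors `g t - g t₀` and `g t' - g t₀` are close to `(t - t₀) • g' t₀` and `(t' - t₀) • g' t₀`,
so their inner product is negative. This survives a continuous injective reparametrization,
so a `C¹`-regular evolute has obtuse chords at `s₁`.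

On the other hand `ev = E + (R - R s₁) • ν` with `E = γ + R s₁ • ν`, and the Frenet formulas give
`E' = κ (R - R s₁) γ'`. On `[s₁, x]` let `p` maximise `|R - R s₁|`; the mean value inequality
bounds `‖E p - E s₁‖` by a small multiple of `|R p - R s₁|`, so `ev p - ev s₁` lies close to
`(R p - R s₁) • ν s₁`. If `R` has a local extremum at `s₁`, the factors `R p - R s₁` on both
sides of `s₁` have the same sign, and the corresponding chords make a non-obtuse angle.
-/

section ObtuseChords

variable {F : Type*} [NormedAddCommGroup F] [InnerProductSpace ℝ F]

lemma abs_inner_sub_inner_le {x y u v : F} {ε : ℝ} (hx : ‖x - u‖ ≤ ε * ‖u‖)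
    (hy : ‖y - v‖ ≤ ε * ‖v‖) :
    |⟪x, y⟫ - ⟪u, v⟫| ≤ (2 * ε + ε ^ 2) * (‖u‖ * ‖v‖) := by
  have hsplit : ⟪x, y⟫ - ⟪u, v⟫ = ⟪x - u, v⟫ + ⟪u, y - v⟫ + ⟪x - u, y - v⟫ := by
    simp only [inner_sub_left, inner_sub_right]; ring
  have h₁ := (abs_real_inner_le_norm (x - u) v).trans
    (mul_le_mul_of_nonneg_right hx (norm_nonneg v))
  have h₂ := (abs_real_inner_le_norm u (y - v)).trans
    (mul_le_mul_of_nonneg_left hy (norm_nonneg u))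
  have h₃ := (abs_real_inner_le_norm (x - u) (y - v)).trans
    (mul_le_mul hx hy (norm_nonneg _) ((norm_nonneg _).trans hx))
  rw [hsplit]
  calc _ ≤ |⟪x - u, v⟫| + |⟪u, y - v⟫| + |⟪x - u, y - v⟫| := abs_add_three _ _ _
    _ ≤ _ := by linarith

lemma abs_inner_sub_le_of_near_smul {x y w : F} {α β : ℝ}
    (hx : ‖x - α • w‖ ≤ 1 / 4 * ‖α • w‖) (hy : ‖y - β • w‖ ≤ 1 / 4 * ‖β • w‖) :
    |⟪x, y⟫ - α * β * ‖w‖ ^ 2| ≤ 9 / 16 * (|α * β| * ‖w‖ ^ 2) := by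
  have key := abs_inner_sub_inner_le hx hy
  rw [real_inner_smul_left, real_inner_smul_right, real_inner_self_eq_norm_sq, norm_smul,
    norm_smul, Real.norm_eq_abs, Real.norm_eq_abs] at key
  rw [abs_mul]
  convert key using 2 <;> ring

lemma inner_nonneg_of_near_smul {x y w : F} {α β : ℝ}
    (hx : ‖x - α • w‖ ≤ 1 / 4 * ‖α • w‖) (hy : ‖y - β • w‖ ≤ 1 / 4 * ‖β • w‖)
    (hαβ : 0 ≤ α * β) : 0 ≤ ⟪x, y⟫ := by
  have key := abs_le.1 (abs_inner_sub_le_of_near_smul hx hy)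
  rw [abs_of_nonneg hαβ] at key
  nlinarith [mul_nonneg hαβ (sq_nonneg ‖w‖)]

lemma inner_neg_of_near_smul {x y w : F} {α β : ℝ}
    (hx : ‖x - α • w‖ ≤ 1 / 4 * ‖α • w‖) (hy : ‖y - β • w‖ ≤ 1 / 4 * ‖β • w‖)
    (hαβ : α * β < 0) (hw : w ≠ 0) : ⟪x, y⟫ < 0 := by
  have key := abs_le.1 (abs_inner_sub_le_of_near_smul hx hy)
  rw [abs_of_neg hαβ] at key
  nlinarith [mul_neg_of_neg_of_pos hαβ (by positivity : 0 < ‖w‖ ^ 2)]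

lemma HasDerivAt.inner_eq_zero_of_eventually_norm_eq_one {T : ℝ → F} {T' : F} {s : ℝ}
    (hT : HasDerivAt T T' s) (hunit : ∀ᶠ τ in 𝓝 s, ‖T τ‖ = 1) : ⟪T', T s⟫ = 0 := by
  have hconst : HasDerivAt (fun τ => ⟪T τ, T τ⟫) 0 s :=
    (hasDerivAt_const s (1 : ℝ)).congr_of_eventuallyEq <| by
      filter_upwards [hunit] with τ hτ
      rw [real_inner_self_eq_norm_sq, hτ, one_pow]
  have h := (hT.inner ℝ hT).unique hconst
  rw [real_inner_comm] at h
  linarith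

def ObtuseChordsAt (f : ℝ → F) (x₀ : ℝ) : Prop :=
  ∀ᶠ p in 𝓝 x₀ ×ˢ 𝓝 x₀, (p.1 - x₀) * (p.2 - x₀) < 0 → ⟪f p.1 - f x₀, f p.2 - f x₀⟫ < 0

lemma HasDerivAt.obtuseChordsAt {g : ℝ → F} {w : F} {t : ℝ} (hg : HasDerivAt g w t)
    (hw : w ≠ 0) : ObtuseChordsAt g t := by
  have hnear : ∀ᶠ τ in 𝓝 t, ‖g τ - g t - (τ - t) • w‖ ≤ 1 / 4 * ‖(τ - t) • w‖ := by
    filter_upwards [(hasDerivAt_iff_isLittleO.1 hg).def (c := ‖w‖ / 4) (by positivity)]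
      with τ hτ
    rw [norm_smul]
    linarith
  filter_upwards [hnear.prod_mk hnear] with p ⟨h₁, h₂⟩ hside
  exact inner_neg_of_near_smul h₁ h₂ hside hw

lemma StrictMonoOn.mul_sub_neg_iff {φ : ℝ → ℝ} {s : Set ℝ} (hφ : StrictMonoOn φ s)
    {x y t : ℝ} (hx : x ∈ s) (hy : y ∈ s) (ht : t ∈ s) :
    (φ x - φ t) * (φ y - φ t) < 0 ↔ (x - t) * (y - t) < 0 := by
  simp only [mul_neg_iff, sub_pos, sub_neg, hφ.lt_iff_lt hx ht, hφ.lt_iff_lt ht hx,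
    hφ.lt_iff_lt hy ht, hφ.lt_iff_lt ht hy]

lemma StrictAntiOn.mul_sub_neg_iff {φ : ℝ → ℝ} {s : Set ℝ} (hφ : StrictAntiOn φ s)
    {x y t : ℝ} (hx : x ∈ s) (hy : y ∈ s) (ht : t ∈ s) :
    (φ x - φ t) * (φ y - φ t) < 0 ↔ (x - t) * (y - t) < 0 := by
  rw [← hφ.neg.mul_sub_neg_iff hx hy ht, neg_sub_neg, neg_sub_neg, ← neg_sub (φ x),
    ← neg_sub (φ y), neg_mul_neg]

lemma nhds_le_map_of_continuousOn_injOn {φ : ℝ → ℝ} {c d t : ℝ}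
    (hφ : ContinuousOn φ (Ioo c d)) (hinj : InjOn φ (Ioo c d)) (ht : t ∈ Ioo c d) :
    𝓝 (φ t) ≤ map φ (𝓝 t) := by
  intro A hA
  obtain ⟨ε, hε, hball⟩ := Metric.mem_nhds_iff.1 (inter_mem hA (Ioo_mem_nhds ht.1 ht.2))
  have hIcc : Icc (t - ε / 2) (t + ε / 2) ⊆ φ ⁻¹' A ∩ Ioo c d := fun τ hτ =>
    hball (by rw [Metric.mem_ball, Real.dist_eq, abs_lt]; constructor <;> linarith [hτ.1, hτ.2])
  have hlo : t - ε / 2 ∈ Ioo c d := (hIcc ⟨le_rfl, by linarith⟩).2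
  have hhi : t + ε / 2 ∈ Ioo c d := (hIcc ⟨by linarith, le_rfl⟩).2
  have hivt : uIcc (φ (t - ε / 2)) (φ (t + ε / 2)) ⊆ A := by
    have hle : t - ε / 2 ≤ t + ε / 2 := by linarith
    refine (intermediate_value_uIcc (hφ.mono ?_)).trans ?_
    · rw [uIcc_of_le hle]; exact fun τ hτ => (hIcc hτ).2
    · rw [uIcc_of_le hle, image_subset_iff]; exact fun τ hτ => (hIcc hτ).1
  refine mem_of_superset ?_ hivt
  rcases hφ.strictMonoOn_of_injOn_Ioo (ht.1.trans ht.2) hinj with hmono | hanti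
  · rw [uIcc_of_lt (hmono hlo hhi (by linarith))]
    exact Icc_mem_nhds (hmono hlo ht (by linarith)) (hmono ht hhi (by linarith))
  · rw [uIcc_of_gt (hanti hlo hhi (by linarith))]
    exact Icc_mem_nhds (hanti ht hhi (by linarith)) (hanti hlo ht (by linarith))

lemma ObtuseChordsAt.of_comp {g : ℝ → F} {φ : ℝ → ℝ} {c d t : ℝ}
    (hφ : ContinuousOn φ (Ioo c d)) (hinj : InjOn φ (Ioo c d)) (ht : t ∈ Ioo c d)
    (h : ObtuseChordsAt (g ∘ φ) t) : ObtuseChordsAt g (φ t) := by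
  have hsign : ∀ x ∈ Ioo c d, ∀ y ∈ Ioo c d,
      (φ x - φ t) * (φ y - φ t) < 0 ↔ (x - t) * (y - t) < 0 := fun x hx y hy => by
    rcases hφ.strictMonoOn_of_injOn_Ioo (ht.1.trans ht.2) hinj with hmono | hanti
    · exact hmono.mul_sub_neg_iff hx hy ht
    · exact hanti.mul_sub_neg_iff hx hy ht
  have hmap := nhds_le_map_of_continuousOn_injOn hφ hinj ht
  have hI : Ioo c d ∈ 𝓝 t := Ioo_mem_nhds ht.1 ht.2
  refine prod_mono hmap hmap ?_
  rw [prod_map_map_eq, mem_map]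
  filter_upwards [h, prod_mem_prod hI hI] with p hp ⟨hp₁, hp₂⟩ hside
  exact hp ((hsign _ hp₁ _ hp₂).1 hside)

end ObtuseChords

lemma CkAlphaRegularOn.obtuseChordsAt {k : ℕ} {α : ℝ≥0} {f : ℝ → Plane} {u v s : ℝ}
    (hk : k ≠ 0) (hf : CkAlphaRegularOn k α f u v) (hs : s ∈ Ioo u v) :
    ObtuseChordsAt f s := by
  obtain ⟨c, d, -, φ, hφ, hbij, ⟨hC, -⟩, hderiv⟩ := hf
  obtain ⟨t, ht, rfl⟩ := hbij.surjOn hs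
  have hdiff : DifferentiableAt ℝ (f ∘ φ) t :=
    (hC.differentiableOn (by exact_mod_cast hk)).differentiableAt (Ioo_mem_nhds ht.1 ht.2)
  exact (hdiff.hasDerivAt.obtuseChordsAt (hderiv t ht)).of_comp hφ hbij.injOn ht

lemma Jrot_Jrot (x : Plane) : Jrot (Jrot x) = -x := by
  ext i; fin_cases i <;> simp [Jrot]

lemma norm_Jrot (x : Plane) : ‖Jrot x‖ = ‖x‖ := by
  simp [EuclideanSpace.norm_eq, Jrot, Fin.sum_univ_two, add_comm]

lemma eq_inner_smul_add_inner_Jrot_smul {x : Plane} (hx : ‖x‖ = 1) (z : Plane) :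
    z = ⟪z, x⟫ • x + ⟪z, Jrot x⟫ • Jrot x := by
  have hx2 : x 0 ^ 2 + x 1 ^ 2 = 1 := by
    simpa [EuclideanSpace.norm_eq, Fin.sum_univ_two, Real.sqrt_eq_one] using hx
  ext i; fin_cases i <;>
    simp [PiLp.inner_apply, Fin.sum_univ_two, Jrot] <;> linear_combination (-z _) * hx2

def jrotCLM : Plane →L[ℝ] Plane :=
  LinearMap.toContinuousLinearMap
    { toFun := Jrot
      map_add' := fun x y => by ext i; fin_cases i <;> simp [Jrot]; ring
      map_smul' := fun c x => by ext i; fin_cases i <;> simp [Jrot] }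

lemma jrotCLM_apply (x : Plane) : jrotCLM x = Jrot x := rfl

section Frenet

variable {U : Set ℝ} {γ ν : ℝ → Plane} {κ : ℝ → ℝ} {s : ℝ}

lemma hasDerivAt_deriv_of_unit_speed (hU : IsOpen U) (hγ : ContDiffOn ℝ 2 γ U)
    (harc : ∀ s ∈ U, ‖deriv γ s‖ = 1) (hν : ∀ s, ν s = Jrot (deriv γ s))
    (hκ : ∀ s, κ s = ⟪deriv (deriv γ) s, ν s⟫) (hs : s ∈ U) :
    HasDerivAt (deriv γ) (κ s • ν s) s := by
  have hT : HasDerivAt (deriv γ) (deriv (deriv γ) s) s :=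
    (((hγ.deriv_of_isOpen hU (by norm_num)).differentiableOn one_ne_zero).differentiableAt
      (hU.mem_nhds hs)).hasDerivAt
  have horth := hT.inner_eq_zero_of_eventually_norm_eq_one
    (eventually_of_mem (hU.mem_nhds hs) harc)
  have hdecomp := eq_inner_smul_add_inner_Jrot_smul (harc s hs) (deriv (deriv γ) s)
  rw [horth, zero_smul, zero_add, ← hν, ← hκ] at hdecomp
  rwa [← hdecomp]

lemma hasDerivAt_normal (hU : IsOpen U) (hγ : ContDiffOn ℝ 2 γ U)
    (harc : ∀ s ∈ U, ‖deriv γ s‖ = 1) (hν : ∀ s, ν s = Jrot (deriv γ s))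
    (hκ : ∀ s, κ s = ⟪deriv (deriv γ) s, ν s⟫) (hs : s ∈ U) :
    HasDerivAt ν (-κ s • deriv γ s) s := by
  have h := jrotCLM.hasFDerivAt.comp_hasDerivAt s
    (hasDerivAt_deriv_of_unit_speed hU hγ harc hν hκ hs)
  have hfun : jrotCLM ∘ deriv γ = ν := funext fun τ => (hν τ).symm
  have hval : jrotCLM (κ s • ν s) = -κ s • deriv γ s := by
    rw [map_smul, jrotCLM_apply, hν, Jrot_Jrot, smul_neg, neg_smul]
  rwa [hfun, hval] at h

lemma continuousOn_normal (hU : IsOpen U) (hγ : ContDiffOn ℝ 2 γ U)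
    (hν : ∀ s, ν s = Jrot (deriv γ s)) : ContinuousOn ν U := by
  have hfun : jrotCLM ∘ deriv γ = ν := funext fun τ => (hν τ).symm
  exact hfun ▸ jrotCLM.continuous.comp_continuousOn
    (hγ.continuousOn_deriv_of_isOpen hU (by norm_num))

lemma continuousOn_curvature (hU : IsOpen U) (hγ : ContDiffOn ℝ 2 γ U)
    (hν : ∀ s, ν s = Jrot (deriv γ s)) (hκ : ∀ s, κ s = ⟪deriv (deriv γ) s, ν s⟫) :
    ContinuousOn κ U :=
  (((hγ.deriv_of_isOpen hU (by norm_num)).continuousOn_deriv_of_isOpen hU le_rfl).inner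
    (continuousOn_normal hU hγ hν)).congr fun τ _ => hκ τ

lemma hasDerivAt_add_smul_normal (c : ℝ) (hU : IsOpen U) (hγ : ContDiffOn ℝ 2 γ U)
    (harc : ∀ s ∈ U, ‖deriv γ s‖ = 1) (hν : ∀ s, ν s = Jrot (deriv γ s))
    (hκ : ∀ s, κ s = ⟪deriv (deriv γ) s, ν s⟫) (hs : s ∈ U) :
    HasDerivAt (fun τ => γ τ + c • ν τ) ((1 - c * κ s) • deriv γ s) s := by
  have hγs : HasDerivAt γ (deriv γ s) s :=
    ((hγ.differentiableOn two_ne_zero).differentiableAt (hU.mem_nhds hs)).hasDerivAt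
  have hsum : deriv γ s + c • (-κ s • deriv γ s) = (1 - c * κ s) • deriv γ s := by module
  exact hsum ▸ hγs.add ((hasDerivAt_normal hU hγ harc hν hκ hs).const_smul c)

end Frenet

lemma exists_ne_isMaxOn_abs_sub {f : ℝ → ℝ} {a x : ℝ} (hf : ContinuousOn f (uIcc a x))
    (hx : x ≠ a) : ∃ p ∈ uIcc a x, p ≠ a ∧ IsMaxOn (fun τ => |f τ - f a|) (uIcc a x) p := by
  obtain ⟨p, hp, hmax⟩ :=
    isCompact_uIcc.exists_isMaxOn nonempty_uIcc (hf.sub continuousOn_const).abs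
  by_cases hpa : p = a
  · subst hpa
    refine ⟨x, right_mem_uIcc, hx, fun τ hτ => ?_⟩
    have hτ' : |f τ - f p| ≤ |f p - f p| := hmax hτ
    rw [sub_self, abs_zero] at hτ'
    exact hτ'.trans (abs_nonneg _)
  · exact ⟨p, hp, hpa, hmax⟩

lemma Filter.Eventually.forall_uIcc {P : ℝ → Prop} {a : ℝ} (h : ∀ᶠ τ in 𝓝 a, P τ) :
    ∀ᶠ x in 𝓝 a, ∀ τ ∈ uIcc a x, P τ := by
  obtain ⟨ε, hε, hball⟩ := Metric.eventually_nhds_iff_ball.1 h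
  filter_upwards [Metric.ball_mem_nhds a hε] with x hx τ hτ
  apply hball
  rw [Metric.mem_ball, Real.dist_eq] at hx ⊢
  exact (abs_sub_left_of_mem_uIcc hτ).trans_lt hx

lemma Filter.Eventually.frequently_of_exists_uIcc {s : Set ℝ} {a : ℝ} {Q : ℝ → Prop}
    [(𝓝[s] a).NeBot] (hs : ∀ x ∈ s, ∀ p ∈ uIcc a x, p ≠ a → p ∈ s)
    (h : ∀ᶠ x in 𝓝[s] a, ∃ p ∈ uIcc a x, p ≠ a ∧ Q p) : ∃ᶠ p in 𝓝[s] a, Q p := by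
  rw [Metric.nhdsWithin_basis_ball.frequently_iff]
  intro ε hε
  obtain ⟨x, ⟨p, hp, hpa, hQ⟩, hxs, hxε⟩ :=
    (h.and (inter_mem_nhdsWithin s (Metric.ball_mem_nhds a hε))).exists
  refine ⟨p, ⟨?_, hs x hxs p hp hpa⟩, hQ⟩
  rw [Metric.mem_ball, Real.dist_eq] at hxε ⊢
  exact (abs_sub_left_of_mem_uIcc hp).trans_lt hxε

lemma frequently_nhdsLT_prod_nhdsGT_of_exists_uIcc {Q : ℝ → Prop} {a : ℝ}
    (h : ∀ᶠ x in 𝓝 a, x ≠ a → ∃ p ∈ uIcc a x, p ≠ a ∧ Q p) :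
    ∃ᶠ p in 𝓝[<] a ×ˢ 𝓝[>] a, Q p.1 ∧ Q p.2 := by
  refine frequently_prod_and.2 ⟨?_, ?_⟩
  · refine Filter.Eventually.frequently_of_exists_uIcc (fun x hx p hp hpa => ?_)
      (eventually_nhdsWithin_iff.2 (h.mono fun x hx hxa => hx (ne_of_lt hxa)))
    exact lt_of_le_of_ne (uIcc_of_ge (mem_Iio.1 hx).le ▸ hp).2 hpa
  · refine Filter.Eventually.frequently_of_exists_uIcc (fun x hx p hp hpa => ?_)
      (eventually_nhdsWithin_iff.2 (h.mono fun x hx hxa => hx (ne_of_gt hxa)))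
    exact lt_of_le_of_ne' (uIcc_of_le (mem_Ioi.1 hx).le ▸ hp).1 hpa

lemma IsLocalExtr.eventually_nonneg_mul_sub {α : Type*} [TopologicalSpace α] {f : α → ℝ}
    {a : α} (h : IsLocalExtr f a) : ∀ᶠ p in 𝓝 a ×ˢ 𝓝 a, 0 ≤ (f p.1 - f a) * (f p.2 - f a) := by
  rcases h with hmin | hmax
  · filter_upwards [hmin.prod_mk hmin] with p ⟨h₁, h₂⟩
    exact mul_nonneg (sub_nonneg.2 h₁) (sub_nonneg.2 h₂)
  · filter_upwards [hmax.prod_mk hmax] with p ⟨h₁, h₂⟩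
    exact mul_nonneg_of_nonpos_of_nonpos (sub_nonpos.2 h₁) (sub_nonpos.2 h₂)

section Evolute

variable {U : Set ℝ} {γ ν ev : ℝ → Plane} {κ R : ℝ → ℝ} {s : ℝ}

lemma norm_evolute_sub_sub_le (hU : IsOpen U) (hγ : ContDiffOn ℝ 2 γ U)
    (harc : ∀ s ∈ U, ‖deriv γ s‖ = 1) (hν : ∀ s, ν s = Jrot (deriv γ s))
    (hκdef : ∀ s, κ s = ⟪deriv (deriv γ) s, ν s⟫) (hκ : ∀ s ∈ U, κ s ≠ 0)
    (hR : ∀ s, R s = (κ s)⁻¹) (hev : ∀ s, ev s = γ s + R s • ν s) {x p K : ℝ}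
    (hxU : uIcc s x ⊆ U) (hK : ∀ τ ∈ uIcc s x, |κ τ| ≤ K) (hp : p ∈ uIcc s x)
    (hmax : IsMaxOn (fun τ => |R τ - R s|) (uIcc s x) p) :
    ‖ev p - ev s - (R p - R s) • ν s‖ ≤ (K * |p - s| + ‖ν p - ν s‖) * |R p - R s| := by
  set E : ℝ → Plane := fun τ => γ τ + R s • ν τ
  have hE' : ∀ τ ∈ uIcc s x, ‖(1 - R s * κ τ) • deriv γ τ‖ ≤ K * |R p - R s| := by
    intro τ hτ
    have hfac : 1 - R s * κ τ = κ τ * (R τ - R s) := by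
      rw [hR τ, mul_sub, mul_inv_cancel₀ (hκ τ (hxU hτ))]; ring
    rw [norm_smul, harc τ (hxU hτ), mul_one, hfac, Real.norm_eq_abs, abs_mul]
    exact mul_le_mul (hK τ hτ) (hmax hτ) (abs_nonneg _) ((hK τ hτ).trans' (abs_nonneg _))
  have hmvt : ‖E p - E s‖ ≤ K * |R p - R s| * ‖p - s‖ :=
    (convex_uIcc s x).norm_image_sub_le_of_norm_hasDerivWithin_le
      (fun τ hτ => (hasDerivAt_add_smul_normal (R s) hU hγ harc hν hκdef
        (hxU hτ)).hasDerivWithinAt) hE' left_mem_uIcc hp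
  have hsplit : ev p - ev s - (R p - R s) • ν s = (E p - E s) + (R p - R s) • (ν p - ν s) := by
    simp only [hev, E]; module
  have hνs : ‖ν s‖ = 1 := by rw [hν, norm_Jrot, harc s (hxU left_mem_uIcc)]
  rw [hsplit]
  calc ‖(E p - E s) + (R p - R s) • (ν p - ν s)‖
      ≤ ‖E p - E s‖ + ‖(R p - R s) • (ν p - ν s)‖ := norm_add_le _ _
    _ ≤ K * |R p - R s| * |p - s| + |R p - R s| * ‖ν p - ν s‖ := by
        rw [norm_smul, Real.norm_eq_abs, ← Real.norm_eq_abs (p - s)]; gcongr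
    _ = (K * |p - s| + ‖ν p - ν s‖) * |R p - R s| := by ring

lemma eventually_exists_evolute_sub_near_normal (hU : IsOpen U) (hγ : ContDiffOn ℝ 2 γ U)
    (harc : ∀ s ∈ U, ‖deriv γ s‖ = 1) (hν : ∀ s, ν s = Jrot (deriv γ s))
    (hκdef : ∀ s, κ s = ⟪deriv (deriv γ) s, ν s⟫) (hκ : ∀ s ∈ U, κ s ≠ 0)
    (hR : ∀ s, R s = (κ s)⁻¹) (hev : ∀ s, ev s = γ s + R s • ν s) (hs : s ∈ U) :
    ∀ᶠ x in 𝓝 s, x ≠ s → ∃ p ∈ uIcc s x, p ≠ s ∧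
      ‖ev p - ev s - (R p - R s) • ν s‖ ≤ 1 / 4 * ‖(R p - R s) • ν s‖ := by
  set K := |κ s| + 1
  have hκc := continuousOn_curvature hU hγ hν hκdef
  have hRc : ContinuousOn R U := (hκc.inv₀ hκ).congr fun τ _ => hR τ
  have hlocal : ∀ᶠ τ in 𝓝 s,
      τ ∈ U ∧ |κ τ| ≤ K ∧ ‖ν τ - ν s‖ ≤ 1 / 8 ∧ K * |τ - s| ≤ 1 / 8 := by
    have hdist : ContinuousAt (fun τ => K * |τ - s|) s := by fun_prop
    filter_upwards [hU.mem_nhds hs,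
      (hκc.continuousAt (hU.mem_nhds hs)).abs.eventually_lt continuousAt_const (lt_add_one _),
      ((continuousOn_normal hU hγ hν).continuousAt (hU.mem_nhds hs)).eventually
        (Metric.closedBall_mem_nhds (ν s) (by norm_num : (0 : ℝ) < 1 / 8)),
      hdist.eventually_lt continuousAt_const (show K * |s - s| < 1 / 8 by simp)]
      with τ hτU hκτ hντ hdτ
    exact ⟨hτU, hκτ.le, dist_eq_norm (ν τ) (ν s) ▸ hντ, hdτ.le⟩
  filter_upwards [hlocal.forall_uIcc] with x hx hxs
  obtain ⟨p, hp, hps, hmax⟩ := exists_ne_isMaxOn_abs_sub (hRc.mono fun τ hτ => (hx τ hτ).1) hxs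
  obtain ⟨-, -, hνp, hdp⟩ := hx p hp
  refine ⟨p, hp, hps, ?_⟩
  have hνs : ‖ν s‖ = 1 := by rw [hν, norm_Jrot, harc s hs]
  calc _ ≤ (K * |p - s| + ‖ν p - ν s‖) * |R p - R s| :=
        norm_evolute_sub_sub_le hU hγ harc hν hκdef hκ hR hev (fun τ hτ => (hx τ hτ).1)
          (fun τ hτ => (hx τ hτ).2.1) hp hmax
    _ ≤ 1 / 4 * ‖(R p - R s) • ν s‖ := by
        rw [norm_smul, hνs, mul_one, Real.norm_eq_abs]
        gcongr
        linarith

end Evolute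

theorem evolute_not_C1_regular_of_localExtr_general
    (a b : ℝ) (γ ν ev : ℝ → Plane) (κ R : ℝ → ℝ)
    (hγ : ContDiffOn ℝ 2 γ (Ioo a b))
    (harc : ∀ s ∈ Ioo a b, ‖deriv γ s‖ = 1)
    (hν : ∀ s, ν s = Jrot (deriv γ s))
    (hκdef : ∀ s, κ s = ⟪deriv (deriv γ) s, ν s⟫)
    (hκ : ∀ s ∈ Ioo a b, κ s ≠ 0)
    (hR : ∀ s, R s = (κ s)⁻¹)
    (hev : ∀ s, ev s = γ s + R s • ν s)
    (s₁ : ℝ) (hs₁ : s₁ ∈ Ioo a b)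
    (hext : IsLocalExtrOn R (Ioo a b) s₁) :
    ∀ u v : ℝ, u < s₁ → s₁ < v → Ioo u v ⊆ Ioo a b →
      ¬ CkAlphaRegularOn 1 0 ev u v := by
  intro u v hu hv _ hreg
  have hobtuse : ObtuseChordsAt ev s₁ := hreg.obtuseChordsAt one_ne_zero ⟨hu, hv⟩
  have hnear := frequently_nhdsLT_prod_nhdsGT_of_exists_uIcc <|
    eventually_exists_evolute_sub_near_normal isOpen_Ioo hγ harc hν hκdef hκ hR hev hs₁
  have hsign := (hext.isLocalExtr (isOpen_Ioo.mem_nhds hs₁)).eventually_nonneg_mul_sub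
  have hsides : 𝓝[<] s₁ ×ˢ 𝓝[>] s₁ ≤ 𝓝 s₁ ×ˢ 𝓝 s₁ :=
    prod_mono nhdsWithin_le_nhds nhdsWithin_le_nhds
  obtain ⟨p, ⟨hp₁, hp₂⟩, hobt, hnonneg, hp₁s, hp₂s⟩ := (hnear.and_eventually
    ((hobtuse.filter_mono hsides).and ((hsign.filter_mono hsides).and
      (prod_mem_prod self_mem_nhdsWithin self_mem_nhdsWithin)))).exists
  exact (hobt (mul_neg_of_neg_of_pos (sub_neg.2 hp₁s) (sub_pos.2 hp₂s))).not_ge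
    (inner_nonneg_of_near_smul hp₁ hp₂ hnonneg)

/-- if `R` has a local extremum at `s₁` then the evolute is not
`C¹`-regular on any neighborhood of `s₁`. -/
theorem evolute_not_C1_regular_of_localExtr
    (a b : ℝ) (hab : a < b) (γ ν ev : ℝ → Plane) (κ R : ℝ → ℝ)
    (hγ : ContDiffOn ℝ 2 γ (Ioo a b))
    (harc : ∀ s ∈ Ioo a b, ‖deriv γ s‖ = 1)
    (hν : ∀ s, ν s = Jrot (deriv γ s))
    (hκdef : ∀ s, κ s = ⟪deriv (deriv γ) s, ν s⟫)
    (hκ : ∀ s ∈ Ioo a b, κ s ≠ 0)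
    (hR : ∀ s, R s = (κ s)⁻¹)
    (hev : ∀ s, ev s = γ s + R s • ν s)
    (s₁ : ℝ) (hs₁ : s₁ ∈ Ioo a b)
    (hext : IsLocalExtrOn R (Ioo a b) s₁) :
    ∀ u v : ℝ, u < s₁ → s₁ < v → Ioo u v ⊆ Ioo a b →
      ¬ CkAlphaRegularOn 1 0 ev u v :=
  evolute_not_C1_regular_of_localExtr_general a b γ ν ev κ R hγ harc hν hκdef hκ hR hev s₁ hs₁ hext
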